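/- arXiv:2501.11173 — 3 statements merged into one kernel-verified Lean document; each statement's English description precedes it below -/
import Mathlib

section
/- Let C be a cap in (Z/2Z)^n with affinely independent subset B of size 8 and three distinct dependent elements x₁, x₂, x₃ ∈ C \ B, with x_i = Σ B_i for subsets B_i ⊆ B. Then |B₁ ∪ B₂ ∪ B₃| = 8, i.e., the union of the three supports is all of B. -/
/-- A cap: a subset of (Z/2Z)^n containing no quad (four distinct vectors summing to zero). -/
def IsCap {n : ℕ} (C : Set (Fin n → ZMod 2)) : Prop :=
  ∀ a ∈ C, ∀ b ∈ C, ∀ c ∈ C, ∀ d ∈ C,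
    a ≠ b → a ≠ c → a ≠ d → b ≠ c → b ≠ d → c ≠ d → a + b + c + d ≠ 0

/-- Affine independence: no element is the sum of an odd number of other elements. -/
def AffIndep {n : ℕ} (B : Finset (Fin n → ZMod 2)) : Prop :=
  ∀ b ∈ B, ∀ T ⊆ B.erase b, Odd T.card → b ≠ ∑ v ∈ T, v


/-! Each support has odd size, neither 1 (as `x ∉ B`) nor 3 (`x` and those three points would
form a quad), so at least 5. Two supports differ in at least 4 points: their symmetric difference
sums to `x + y`, so if it had two points, `x`, `y` and these would form a quad. Likewise the
symmetric difference of all three supports is not a single point `b`, or `x₁, x₂, x₃, b` would be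
a quad. In a union of at most 7 points these constraints clash: the complements of the supports
have at most 2 points and pairwise differ in 4, so they are disjoint pairs, and the triple
symmetric difference is the complement of their union, a single point. -/

open Finset symmDiff

namespace Finset

variable {α : Type*} [DecidableEq α]

lemma card_symmDiff_add_two_mul_card_inter (s t : Finset α) :
    #(s ∆ t) + 2 * #(s ∩ t) = #s + #t := by
  have hst := card_sdiff_add_card_inter s t
  have hts := card_sdiff_add_card_inter t s
  rw [inter_comm] at hts
  rw [Finset.symmDiff_def, card_union_of_disjoint disjoint_sdiff_sdiff]
  omega

lemma even_card_symmDiff {s t : Finset α} (hs : Odd #s) (ht : Odd #t) : Even #(s ∆ t) := by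
  obtain ⟨k, hk⟩ := hs
  obtain ⟨l, hl⟩ := ht
  exact ⟨k + l + 1 - #(s ∩ t), by have := card_symmDiff_add_two_mul_card_inter s t; omega⟩

lemma card_symmDiff_symmDiff_eq_one {U A B C : Finset α} (hU : #U ≤ 7)
    (hAU : A ⊆ U) (hBU : B ⊆ U) (hCU : C ⊆ U) (hA : 5 ≤ #A) (hB : 5 ≤ #B) (hC : 5 ≤ #C)
    (hAB : 4 ≤ #(A ∆ B)) (hAC : 4 ≤ #(A ∆ C)) (hBC : 4 ≤ #(B ∆ C)) :
    #(A ∆ B ∆ C) = 1 := by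
  have hcompl {X : Finset α} (hX : X ⊆ U) : #(U ∆ X) + #X = #U := by
    rw [symmDiff_of_ge hX]; exact card_sdiff_add_card_eq_card hX
  have hsub {X : Finset α} (hX : X ⊆ U) : U ∆ X ⊆ U := by
    rw [symmDiff_of_ge hX]; exact sdiff_subset
  have hsymm (X Y : Finset α) : (U ∆ X) ∆ (U ∆ Y) = X ∆ Y := by
    rw [symmDiff_symmDiff_symmDiff_comm, symmDiff_self, bot_symmDiff]
  have hpair {X Y : Finset α} (hX : X ⊆ U) (hY : Y ⊆ U) (h5X : 5 ≤ #X) (h5Y : 5 ≤ #Y)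
      (hXY : 4 ≤ #(X ∆ Y)) : #(U ∆ X) = 2 ∧ Disjoint (U ∆ X) (U ∆ Y) := by
    have := card_symmDiff_add_two_mul_card_inter (U ∆ X) (U ∆ Y)
    rw [hsymm] at this
    have := hcompl hX
    have := hcompl hY
    refine ⟨by omega, disjoint_iff_inter_eq_empty.2 (card_eq_zero.1 (by omega))⟩
  obtain ⟨hA2, hdAB⟩ := hpair hAU hBU hA hB hAB
  obtain ⟨hB2, hdBC⟩ := hpair hBU hCU hB hC hBC
  obtain ⟨hC2, hdCA⟩ := hpair hCU hAU hC hA (symmDiff_comm A C ▸ hAC)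
  have hdABC : Disjoint ((U ∆ A) ∪ (U ∆ B)) (U ∆ C) := disjoint_union_left.2 ⟨hdCA.symm, hdBC⟩
  have hD : (U ∆ A) ∆ (U ∆ B) ∆ (U ∆ C) = (U ∆ A) ∪ (U ∆ B) ∪ (U ∆ C) := by
    rw [symmDiff_eq_union hdAB, symmDiff_eq_union hdABC]
  have hDU : (U ∆ A) ∪ (U ∆ B) ∪ (U ∆ C) ⊆ U :=
    union_subset (union_subset (hsub hAU) (hsub hBU)) (hsub hCU)
  have hcardD : #((U ∆ A) ∪ (U ∆ B) ∪ (U ∆ C)) = 6 := by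
    rw [card_union_of_disjoint hdABC, card_union_of_disjoint hdAB]
    omega
  have hABC : A ∆ B ∆ C = U ∆ ((U ∆ A) ∆ (U ∆ B) ∆ (U ∆ C)) := by
    rw [hsymm, symmDiff_left_comm, symmDiff_symmDiff_cancel_left]
  rw [hABC, hD]
  have := hcompl hDU
  have := hcompl hAU
  omega

end Finset

lemma ZModModule.sum_symmDiff {ι G : Type*} [DecidableEq ι] [AddCommGroup G] [Module (ZMod 2) G]
    (f : ι → G) (s t : Finset ι) : ∑ i ∈ s ∆ t, f i = ∑ i ∈ s, f i + ∑ i ∈ t, f i := by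
  rw [← sum_union_inter, ← sum_sdiff (inter_subset_union (s := s) (t := t)), add_assoc,
    ZModModule.add_self, add_zero, symmDiff_eq_sup_sdiff_inf]
  rfl

namespace IsCap

variable {n : ℕ} {C : Set (Fin n → ZMod 2)} {B S T R : Finset (Fin n → ZMod 2)}
  {x y z : Fin n → ZMod 2}

lemma sum_ne_zero (hC : IsCap C) {Q : Finset (Fin n → ZMod 2)} (hQC : ↑Q ⊆ C) (hQ : #Q = 4) :
    ∑ v ∈ Q, v ≠ 0 := by
  obtain ⟨a, b, c, d, hab, hac, had, hbc, hbd, hcd, rfl⟩ := card_eq_four.1 hQ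
  simp only [coe_insert, coe_singleton, Set.insert_subset_iff, Set.singleton_subset_iff] at hQC
  obtain ⟨ha, hb, hc, hd⟩ := hQC
  rw [sum_insert (by simp [hab, hac, had]), sum_insert (by simp [hbc, hbd]), sum_pair hcd,
    ← add_assoc, ← add_assoc]
  exact hC a ha b hb c hc d hd hab hac had hbc hbd hcd

lemma sum_ne_sum (hC : IsCap C) {X D : Finset (Fin n → ZMod 2)} (hBC : ↑B ⊆ C)
    (hXC : ↑X ⊆ C \ ↑B) (hDB : D ⊆ B) (hcard : #X + #D = 4) : ∑ v ∈ X, v ≠ ∑ v ∈ D, v := by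
  have hXD : Disjoint X D := by
    rw [← disjoint_coe]
    exact (Set.disjoint_sdiff_left.mono_left hXC).mono_right (coe_subset.2 hDB)
  intro h
  refine hC.sum_ne_zero (Q := X ∪ D) ?_ (by rw [card_union_of_disjoint hXD, hcard]) ?_
  · rw [coe_union]
    exact Set.union_subset (hXC.trans Set.sdiff_subset) ((coe_subset.2 hDB).trans hBC)
  · rw [sum_union hXD, h, ZModModule.add_self]

lemma five_le_card_of_sum_eq (hC : IsCap C) (hBC : ↑B ⊆ C) (hx : x ∈ C \ ↑B) (hSB : S ⊆ B)
    (hS : Odd #S) (hxS : x = ∑ v ∈ S, v) : 5 ≤ #S := by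
  have h1 : #S ≠ 1 := by
    intro h
    obtain ⟨a, rfl⟩ := card_eq_one.1 h
    rw [sum_singleton] at hxS
    exact hx.2 (hxS ▸ hSB (mem_singleton_self a))
  have h3 : #S ≠ 3 := fun h ↦ hC.sum_ne_sum (X := {x}) hBC (by simpa using hx) hSB
    (by rw [card_singleton, h]) (by rw [sum_singleton, hxS])
  obtain ⟨k, hk⟩ := hS
  omega

lemma four_le_card_symmDiff_of_sum_eq (hC : IsCap C) (hBC : ↑B ⊆ C) (hx : x ∈ C \ ↑B)
    (hy : y ∈ C \ ↑B) (hxy : x ≠ y) (hSB : S ⊆ B) (hTB : T ⊆ B) (hS : Odd #S) (hT : Odd #T)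
    (hxS : x = ∑ v ∈ S, v) (hyT : y = ∑ v ∈ T, v) : 4 ≤ #(S ∆ T) := by
  have h0 : #(S ∆ T) ≠ 0 := by
    rw [Ne, card_eq_zero, symmDiff_eq_empty]
    rintro rfl
    exact hxy (hxS.trans hyT.symm)
  have h2 : #(S ∆ T) ≠ 2 := fun h ↦ hC.sum_ne_sum (X := {x, y}) hBC
    (by simp [Set.insert_subset_iff, hx, hy]) (symmDiff_subset_union.trans (union_subset hSB hTB))
    (by rw [card_pair hxy, h]) (by rw [sum_pair hxy, ZModModule.sum_symmDiff, hxS, hyT])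
  obtain ⟨k, hk⟩ := even_card_symmDiff hS hT
  omega

lemma card_symmDiff_symmDiff_ne_one_of_sum_eq (hC : IsCap C) (hBC : ↑B ⊆ C) (hx : x ∈ C \ ↑B)
    (hy : y ∈ C \ ↑B) (hz : z ∈ C \ ↑B) (hxy : x ≠ y) (hxz : x ≠ z) (hyz : y ≠ z)
    (hSB : S ⊆ B) (hTB : T ⊆ B) (hRB : R ⊆ B)
    (hxS : x = ∑ v ∈ S, v) (hyT : y = ∑ v ∈ T, v) (hzR : z = ∑ v ∈ R, v) :
    #(S ∆ T ∆ R) ≠ 1 := fun h ↦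
  hC.sum_ne_sum (X := {x, y, z}) hBC (by simp [Set.insert_subset_iff, hx, hy, hz])
    ((symmDiff_subset_union.trans (union_subset
      (symmDiff_subset_union.trans (union_subset hSB hTB)) hRB)))
    (by rw [card_eq_three.2 ⟨x, y, z, hxy, hxz, hyz, rfl⟩, h])
    (by rw [sum_insert (by simp [hxy, hxz]), sum_pair hyz, ZModModule.sum_symmDiff,
      ZModModule.sum_symmDiff, hxS, hyT, hzR, add_assoc])

end IsCap

theorem three_supports_cover_general {n : ℕ} (C : Set (Fin n → ZMod 2))
    (hC : IsCap C) (B B₁ B₂ B₃ : Finset (Fin n → ZMod 2)) (hBC : ↑B ⊆ C)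
    (hBcard : B.card = 8)
    (x₁ x₂ x₃ : Fin n → ZMod 2)
    (hx₁C : x₁ ∈ C) (hx₁B : x₁ ∉ B)
    (hx₂C : x₂ ∈ C) (hx₂B : x₂ ∉ B)
    (hx₃C : x₃ ∈ C) (hx₃B : x₃ ∉ B)
    (h12 : x₁ ≠ x₂) (h13 : x₁ ≠ x₃) (h23 : x₂ ≠ x₃)
    (hs₁ : B₁ ⊆ B) (hs₂ : B₂ ⊆ B) (hs₃ : B₃ ⊆ B)
    (ho₁ : Odd B₁.card) (ho₂ : Odd B₂.card) (ho₃ : Odd B₃.card)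
    (he₁ : x₁ = ∑ v ∈ B₁, v) (he₂ : x₂ = ∑ v ∈ B₂, v) (he₃ : x₃ = ∑ v ∈ B₃, v) :
    (B₁ ∪ B₂ ∪ B₃).card = 8 := by
  have hx₁ : x₁ ∈ C \ ↑B := ⟨hx₁C, hx₁B⟩
  have hx₂ : x₂ ∈ C \ ↑B := ⟨hx₂C, hx₂B⟩
  have hx₃ : x₃ ∈ C \ ↑B := ⟨hx₃C, hx₃B⟩
  have hU : #(B₁ ∪ B₂ ∪ B₃) ≤ 8 :=
    hBcard ▸ card_le_card (union_subset (union_subset hs₁ hs₂) hs₃)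
  by_contra hne
  exact hC.card_symmDiff_symmDiff_ne_one_of_sum_eq hBC hx₁ hx₂ hx₃ h12 h13 h23 hs₁ hs₂ hs₃
    he₁ he₂ he₃
    (card_symmDiff_symmDiff_eq_one (by omega)
      (subset_union_left.trans subset_union_left) (subset_union_right.trans subset_union_left)
      subset_union_right
      (hC.five_le_card_of_sum_eq hBC hx₁ hs₁ ho₁ he₁)
      (hC.five_le_card_of_sum_eq hBC hx₂ hs₂ ho₂ he₂)
      (hC.five_le_card_of_sum_eq hBC hx₃ hs₃ ho₃ he₃)
      (hC.four_le_card_symmDiff_of_sum_eq hBC hx₁ hx₂ h12 hs₁ hs₂ ho₁ ho₂ he₁ he₂)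
      (hC.four_le_card_symmDiff_of_sum_eq hBC hx₁ hx₃ h13 hs₁ hs₃ ho₁ ho₃ he₁ he₃)
      (hC.four_le_card_symmDiff_of_sum_eq hBC hx₂ hx₃ h23 hs₂ hs₃ ho₂ ho₃ he₂ he₃))

theorem three_supports_cover {n : ℕ} (C : Set (Fin n → ZMod 2))
    (hC : IsCap C) (B B₁ B₂ B₃ : Finset (Fin n → ZMod 2)) (hBC : ↑B ⊆ C)
    (hB : AffIndep B) (hBcard : B.card = 8)
    (x₁ x₂ x₃ : Fin n → ZMod 2)
    (hx₁C : x₁ ∈ C) (hx₁B : x₁ ∉ B)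
    (hx₂C : x₂ ∈ C) (hx₂B : x₂ ∉ B)
    (hx₃C : x₃ ∈ C) (hx₃B : x₃ ∉ B)
    (h12 : x₁ ≠ x₂) (h13 : x₁ ≠ x₃) (h23 : x₂ ≠ x₃)
    (hs₁ : B₁ ⊆ B) (hs₂ : B₂ ⊆ B) (hs₃ : B₃ ⊆ B)
    (ho₁ : Odd B₁.card) (ho₂ : Odd B₂.card) (ho₃ : Odd B₃.card)
    (he₁ : x₁ = ∑ v ∈ B₁, v) (he₂ : x₂ = ∑ v ∈ B₂, v) (he₃ : x₃ = ∑ v ∈ B₃, v) :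
    (B₁ ∪ B₂ ∪ B₃).card = 8 :=
  three_supports_cover_general C hC B B₁ B₂ B₃ hBC hBcard x₁ x₂ x₃ hx₁C hx₁B hx₂C hx₂B hx₃C hx₃B h12
    h13 h23 hs₁ hs₂ hs₃ ho₁ ho₂ ho₃ he₁ he₂ he₃
end

section
/- Let B = {a₁, ..., a₈} be affinely independent in (Z/2Z)^n and let x₁ = a₁+a₂+a₃+a₄+a₅, x₂ = a₃+a₄+a₅+a₆+a₇, x₃ = a₁+a₂+a₃+a₇+a₈. Then C = B ∪ {x₁, x₂, x₃} is a cap of size 11. -/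
/-!
Write `L c = ∑ i, c i • a i` for `c : Fin 8 → ZMod 2`. Affine independence of the `a i` says exactly
that `L` kills no nonzero vector of even weight. Every point of `C` is `L c` for a vector `c` of odd
weight, and a difference or a sum of four such vectors has even weight; so `L` is injective on the
eleven coefficient vectors and any quad in `C` would come from a quad among them, of which there is
none by a finite check.
-/

open Finset Function

section AffIndep

variable {n : ℕ} {ι : Type*} [Fintype ι] {a : ι → Fin n → ZMod 2}

theorem AffIndep.sum_ne_zero (hB : AffIndep (univ.image a)) (ha : Injective a) {S : Finset ι}
    (hS : S.Nonempty) (heven : Even #S) : ∑ i ∈ S, a i ≠ 0 := by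
  classical
  obtain ⟨j, hj⟩ := hS
  intro hzero
  refine hB (a j) (mem_image_of_mem a (mem_univ j)) ((S.erase j).image a) ?_ ?_ ?_
  · rw [image_erase ha]
    exact erase_subset_erase _ (image_subset_image (subset_univ S))
  · rw [card_image_of_injective _ ha, card_erase_of_mem hj]
    exact Nat.Even.sub_odd (card_pos.mpr ⟨j, hj⟩) heven odd_one
  · rw [sum_image ha.injOn, ← ZModModule.neg_eq_self (a j)]
    exact neg_eq_of_add_eq_zero_right ((add_sum_erase S a hj).trans hzero)

theorem AffIndep.linearCombination_ne_zero (hB : AffIndep (univ.image a)) (ha : Injective a)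
    {c : ι → ZMod 2} (hc : c ≠ 0) (hsum : ∑ i, c i = 0) :
    Fintype.linearCombination (ZMod 2) a c ≠ 0 := by
  classical
  set S := univ.filter (c · ≠ 0)
  have hcS : ∀ i, c i = if i ∈ S then 1 else 0 := fun i => by
    simp only [S, mem_filter, mem_univ, true_and]
    generalize c i = x
    fin_cases x <;> rfl
  have hS : S.Nonempty := by
    obtain ⟨i, hi⟩ := Function.ne_iff.mp hc
    exact ⟨i, by simpa [S] using hi⟩
  have heven : Even #S := by
    rw [← ZMod.natCast_eq_zero_iff_even, ← hsum, sum_congr rfl fun i _ => hcS i,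
      sum_boole, filter_mem_eq_inter, univ_inter]
  rw [Fintype.linearCombination_apply, sum_congr rfl fun i _ => by rw [hcS i]]
  simpa [ite_smul] using hB.sum_ne_zero ha hS heven

theorem AffIndep.injOn_linearCombination (hB : AffIndep (univ.image a)) (ha : Injective a) :
    Set.InjOn (Fintype.linearCombination (ZMod 2) a) {c | ∑ i, c i = 1} := by
  intro c hc d hd hcd
  by_contra hne
  refine hB.linearCombination_ne_zero ha (sub_ne_zero.mpr hne) ?_ (by rw [map_sub, hcd, sub_self])
  simp only [Pi.sub_apply, sum_sub_distrib, hc.out, hd.out, sub_self]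

end AffIndep

theorem AffIndep.isCap_image_linearCombination {n m : ℕ} {a : Fin m → Fin n → ZMod 2}
    (hB : AffIndep (univ.image a)) (ha : Injective a) {S : Set (Fin m → ZMod 2)} (hS : IsCap S)
    (hodd : ∀ c ∈ S, ∑ i, c i = 1) :
    IsCap (Fintype.linearCombination (ZMod 2) a '' S) := by
  rintro _ ⟨c₁, h₁, rfl⟩ _ ⟨c₂, h₂, rfl⟩ _ ⟨c₃, h₃, rfl⟩ _ ⟨c₄, h₄, rfl⟩ h₁₂ h₁₃ h₁₄ h₂₃ h₂₄ h₃₄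
  rw [← map_add, ← map_add, ← map_add]
  refine hB.linearCombination_ne_zero ha
    (hS c₁ h₁ c₂ h₂ c₃ h₃ c₄ h₄ (ne_of_apply_ne _ h₁₂) (ne_of_apply_ne _ h₁₃)
      (ne_of_apply_ne _ h₁₄) (ne_of_apply_ne _ h₂₃) (ne_of_apply_ne _ h₂₄) (ne_of_apply_ne _ h₃₄)) ?_
  simp only [Pi.add_apply, sum_add_distrib, hodd _ h₁, hodd _ h₂, hodd _ h₃, hodd _ h₄]
  decide

theorem isCap_range {n : ℕ} {κ : Type*} {v : κ → Fin n → ZMod 2}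
    (hv : ∀ k l m p, k ≠ l → k ≠ m → k ≠ p → l ≠ m → l ≠ p → m ≠ p →
      v k + v l + v m + v p ≠ 0) :
    IsCap (Set.range v) := by
  rintro _ ⟨k, rfl⟩ _ ⟨l, rfl⟩ _ ⟨m, rfl⟩ _ ⟨p, rfl⟩ hkl hkm hkp hlm hlp hmp
  exact hv k l m p (ne_of_apply_ne v hkl) (ne_of_apply_ne v hkm) (ne_of_apply_ne v hkp)
    (ne_of_apply_ne v hlm) (ne_of_apply_ne v hlp) (ne_of_apply_ne v hmp)

-- The coefficient vectors of `a 0, …, a 7` and of the three extra points.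
def capCode : Fin 11 → Fin 8 → ZMod 2 :=
  ![Pi.single 0 1, Pi.single 1 1, Pi.single 2 1, Pi.single 3 1, Pi.single 4 1, Pi.single 5 1,
    Pi.single 6 1, Pi.single 7 1,
    ![1, 1, 1, 1, 1, 0, 0, 0], ![0, 0, 1, 1, 1, 1, 1, 0], ![1, 1, 1, 0, 0, 0, 1, 1]]

theorem sum_capCode : ∀ k, ∑ i, capCode k i = 1 := by decide +kernel

theorem capCode_injective : Injective capCode := by decide +kernel

theorem isCap_range_capCode : IsCap (Set.range capCode) :=
  isCap_range (by decide +kernel)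

theorem cap11_555_332 {n : ℕ} (a : Fin 8 → (Fin n → ZMod 2))
    (ha : Function.Injective a)
    (hB : AffIndep (Finset.image a Finset.univ)) :
    IsCap (↑(Finset.image a Finset.univ ∪
        {a 0 + a 1 + a 2 + a 3 + a 4,
         a 2 + a 3 + a 4 + a 5 + a 6,
         a 0 + a 1 + a 2 + a 6 + a 7}) : Set (Fin n → ZMod 2)) ∧
    (Finset.image a Finset.univ ∪
        {a 0 + a 1 + a 2 + a 3 + a 4,
         a 2 + a 3 + a 4 + a 5 + a 6,
         a 0 + a 1 + a 2 + a 6 + a 7}).card = 11 := by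
  set L := Fintype.linearCombination (ZMod 2) a
  have hC : univ.image a ∪ {a 0 + a 1 + a 2 + a 3 + a 4, a 2 + a 3 + a 4 + a 5 + a 6,
      a 0 + a 1 + a 2 + a 6 + a 7} = univ.image (L ∘ capCode) := by
    ext x
    simp [L, capCode, Fin.exists_fin_succ, Fintype.linearCombination_apply, Fin.sum_univ_eight,
      @eq_comm _ x]
    tauto
  have hinj : Injective (L ∘ capCode) :=
    Set.injOn_univ.mp <| (hB.injOn_linearCombination ha).comp capCode_injective.injOn
      fun k _ => sum_capCode k
  rw [hC]
  refine ⟨?_, ?_⟩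
  · rw [coe_image, coe_univ, Set.image_univ, Set.range_comp]
    exact hB.isCap_image_linearCombination ha isCap_range_capCode
      (Set.forall_mem_range.mpr sum_capCode)
  · rw [card_image_of_injective _ hinj, card_univ, Fintype.card_fin]
end

section
/- Let B = {a₁, ..., a₈} be affinely independent in (Z/2Z)^n and let x₁ = a₁+a₂+a₃+a₄+a₅, x₂ = a₁+a₂+a₃+a₇+a₈, x₃ = a₃+a₄+a₅+a₆+a₇, x₄ = a₂+a₃+a₄+a₆+a₈. Then C = B ∪ {x₁, x₂, x₃, x₄} is a cap of size 12. -/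
/-!
Write every point of `C` as a combination `∑ cᵢ aᵢ` of the `aᵢ`: the coefficient vectors are the
eight unit vectors and four vectors of weight five, all of odd weight in `(ℤ/2ℤ)⁸`. A sum of two or
four points of `C` then has a coefficient vector of even weight, and affine independence of the
`aᵢ` says exactly that a nonzero even-weight combination of them is nonzero. So `C` is a cap of
size 12 as soon as the twelve coefficient vectors are distinct and form a cap, which is a finite
check.
-/

open Finset

theorem isCap_of_forall_add_add_notMem {n : ℕ} {C : Set (Fin n → ZMod 2)}
    (h : ∀ x ∈ C, ∀ y ∈ C, ∀ z ∈ C, x ≠ y → x ≠ z → y ≠ z → x + y + z ∉ C) : IsCap C := by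
  intro x hx y hy z hz w hw hxy hxz _ hyz _ _ hsum
  have hw' : w = x + y + z := by
    rw [eq_neg_of_add_eq_zero_right hsum, ZModModule.neg_eq_self]
  exact h x hx y hy z hz hxy hxz hyz (hw' ▸ hw)

section AffIndep

variable {ι : Type*} [Fintype ι] [DecidableEq ι] {n : ℕ} {a : ι → Fin n → ZMod 2}

theorem sum_ne_zero_of_affIndep (ha : Function.Injective a) (hB : AffIndep (univ.image a))
    {S : Finset ι} (hS : S.Nonempty) (heven : Even #S) : ∑ i ∈ S, a i ≠ 0 := by
  obtain ⟨b, hb⟩ := hS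
  intro h0
  refine hB (a b) (mem_image_of_mem a (mem_univ b)) ((S.erase b).image a) ?_ ?_ ?_
  · intro v hv
    obtain ⟨j, hj, rfl⟩ := mem_image.1 hv
    exact mem_erase.2 ⟨ha.ne (ne_of_mem_erase hj), mem_image_of_mem a (mem_univ j)⟩
  · rw [card_image_of_injective _ ha, card_erase_of_mem hb]
    exact Nat.Even.sub_odd (card_pos.2 ⟨b, hb⟩) heven odd_one
  · rw [sum_image ha.injOn, ← ZModModule.neg_eq_self (a b)]
    exact (eq_neg_of_add_eq_zero_right ((add_sum_erase S a hb).trans h0)).symm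

theorem eq_zero_of_linearCombination_eq_zero_of_affIndep (ha : Function.Injective a)
    (hB : AffIndep (univ.image a)) {c : ι → ZMod 2}
    (hc : Fintype.linearCombination (ZMod 2) a c = 0) (hweight : ∑ i, c i = 0) : c = 0 := by
  by_contra hne
  set S := univ.filter (c · ≠ 0)
  have hS : ∀ i ∈ S, c i = 1 := fun i hi => Fin.eq_one_of_ne_zero _ (mem_filter.1 hi).2
  refine sum_ne_zero_of_affIndep ha hB (S := S) ?_ ?_ ?_
  · obtain ⟨i, hi⟩ := Function.ne_iff.1 hne
    exact ⟨i, mem_filter.2 ⟨mem_univ i, hi⟩⟩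
  · rw [← ZMod.natCast_eq_zero_iff_even, ← hweight, ← sum_filter_ne_zero, card_eq_sum_ones,
      Nat.cast_sum, Nat.cast_one]
    exact (sum_congr rfl hS).symm
  · calc ∑ i ∈ S, a i = ∑ i ∈ S, c i • a i := sum_congr rfl fun i hi => by rw [hS i hi, one_smul]
      _ = ∑ i, c i • a i := sum_filter_of_ne fun i _ h hci => h (by rw [hci, zero_smul])
      _ = 0 := by rw [← Fintype.linearCombination_apply, hc]

end AffIndep

section EvenWeightKernel

variable {m n : ℕ} {f : (Fin m → ZMod 2) →ₗ[ZMod 2] (Fin n → ZMod 2)} {K : Set (Fin m → ZMod 2)}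

theorem injOn_of_forall_sum_eq_one (hf : ∀ v, f v = 0 → ∑ i, v i = 0 → v = 0)
    (hK : ∀ x ∈ K, ∑ i, x i = 1) : Set.InjOn f K := by
  intro x hx y hy hxy
  have h := hf (x + y) (by rw [map_add, hxy, ZModModule.add_self])
    (by simp only [Pi.add_apply, sum_add_distrib, hK x hx, hK y hy]; rfl)
  rw [← sub_eq_zero, ZModModule.sub_eq_add, h]

theorem IsCap.image_of_forall_sum_eq_one (hcap : IsCap K)
    (hf : ∀ v, f v = 0 → ∑ i, v i = 0 → v = 0) (hK : ∀ x ∈ K, ∑ i, x i = 1) :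
    IsCap (f '' K) := by
  rintro _ ⟨x, hx, rfl⟩ _ ⟨y, hy, rfl⟩ _ ⟨z, hz, rfl⟩ _ ⟨w, hw, rfl⟩
    hxy hxz hxw hyz hyw hzw hsum
  refine hcap x hx y hy z hz w hw (ne_of_apply_ne f hxy) (ne_of_apply_ne f hxz)
    (ne_of_apply_ne f hxw) (ne_of_apply_ne f hyz) (ne_of_apply_ne f hyw) (ne_of_apply_ne f hzw)
    (hf _ (by simpa only [map_add] using hsum) ?_)
  simp only [Pi.add_apply, sum_add_distrib, hK x hx, hK y hy, hK z hz, hK w hw]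
  rfl

end EvenWeightKernel

/-- The coefficient vectors, with respect to `a₀, …, a₇`, of the twelve points of the cap. -/
def capCoeffs : Finset (Fin 8 → ZMod 2) :=
  univ.image (Pi.single · 1) ∪
    {![1, 1, 1, 1, 1, 0, 0, 0], ![1, 1, 1, 0, 0, 0, 1, 1],
     ![0, 0, 1, 1, 1, 1, 1, 0], ![0, 1, 1, 1, 0, 1, 0, 1]}

-- Testing triples rather than quadruples keeps the kernel computation affordable.
theorem isCap_capCoeffs : IsCap (capCoeffs : Set (Fin 8 → ZMod 2)) :=
  isCap_of_forall_add_add_notMem (by simp only [mem_coe]; decide +kernel)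

theorem sum_eq_one_of_mem_capCoeffs : ∀ x ∈ capCoeffs, ∑ i, x i = 1 := by
  simp only [Fin.sum_univ_eight]
  decide +kernel

theorem card_capCoeffs : #capCoeffs = 12 := by decide

theorem image_linearCombination_capCoeffs {n : ℕ} (a : Fin 8 → Fin n → ZMod 2) :
    capCoeffs.image (Fintype.linearCombination (ZMod 2) a) =
      univ.image a ∪
        {a 0 + a 1 + a 2 + a 3 + a 4, a 0 + a 1 + a 2 + a 6 + a 7,
         a 2 + a 3 + a 4 + a 5 + a 6, a 1 + a 2 + a 3 + a 5 + a 7} := by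
  simp [capCoeffs, image_image, Function.comp_def, Fintype.linearCombination_apply,
    Fin.sum_univ_eight]

theorem cap12_233333 {n : ℕ} (a : Fin 8 → (Fin n → ZMod 2))
    (ha : Function.Injective a)
    (hB : AffIndep (Finset.image a Finset.univ)) :
    IsCap (↑(Finset.image a Finset.univ ∪
        {a 0 + a 1 + a 2 + a 3 + a 4,
         a 0 + a 1 + a 2 + a 6 + a 7,
         a 2 + a 3 + a 4 + a 5 + a 6,
         a 1 + a 2 + a 3 + a 5 + a 7}) : Set (Fin n → ZMod 2)) ∧
    (Finset.image a Finset.univ ∪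
        {a 0 + a 1 + a 2 + a 3 + a 4,
         a 0 + a 1 + a 2 + a 6 + a 7,
         a 2 + a 3 + a 4 + a 5 + a 6,
         a 1 + a 2 + a 3 + a 5 + a 7}).card = 12 := by
  have hker : ∀ c, Fintype.linearCombination (ZMod 2) a c = 0 → ∑ i, c i = 0 → c = 0 :=
    fun _ => eq_zero_of_linearCombination_eq_zero_of_affIndep ha hB
  rw [← image_linearCombination_capCoeffs, coe_image]
  refine ⟨isCap_capCoeffs.image_of_forall_sum_eq_one hker sum_eq_one_of_mem_capCoeffs, ?_⟩
  rw [card_image_of_injOn (injOn_of_forall_sum_eq_one hker sum_eq_one_of_mem_capCoeffs),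
    card_capCoeffs]
end
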